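/- Let $X$ and $\tilde{X}$ be random variables with $\tilde{X}$ measurable, let $g : \mathbb{R}^p \times \mathbb{R}^p \to [0,\infty)$ be measurable with $\mathbb{E}[g(X,\tilde{X})] < \infty$, and let $B > 0$. Define $\varrho(\tilde{X}) = \mathbb{E}[g(X,\tilde{X}) \mid \tilde{X}]$, assume $r = \mathbb{E}[\sqrt{\varrho(\tilde{X})}]$ satisfies $0 < r < \infty$, and define $\pi_{\mathrm{opt}}(\tilde{X}) = (B/r)\sqrt{\varrho(\tilde{X})}$ (assumed a.s. positive). Then for every measurable function $\pi : \mathbb{R}^p \to (0,\infty)$ with $\mathbb{E}[\pi(\tilde{X})] \le B$, one has $\mathbb{E}[g(X,\tilde{X})/\pi_{\mathrm{opt}}(\tilde{X})] \le \mathbb{E}[g(X,\tilde{X})/\pi(\tilde{X})]$. -/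

import Mathlib

open MeasureTheory

/-- Weighted tower property: for a nonnegative integrable `f` and an `m`-measurable
weight `h : Ω → ℝ≥0∞`, `∫⁻ h · f = ∫⁻ h · E[f|m]`. -/
lemma lintegral_mul_condexp {Ω : Type*} {m m0 : MeasurableSpace Ω} (hm : m ≤ m0)
    (μ : Measure Ω) [IsFiniteMeasure μ] {f : Ω → ℝ} (hfm : Measurable f)
    (hfint : Integrable f μ) (hf0 : 0 ≤ᵐ[μ] f) {h : Ω → ENNReal}
    (hh : Measurable[m] h) :
    ∫⁻ ω, h ω * ENNReal.ofReal (f ω) ∂μ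
      = ∫⁻ ω, h ω * ENNReal.ofReal ((μ[f|m]) ω) ∂μ := by
  have hcm : StronglyMeasurable[m] (μ[f|m]) := stronglyMeasurable_condExp
  have hcint : Integrable (μ[f|m]) μ := integrable_condExp
  have hc0 : 0 ≤ᵐ[μ] (μ[f|m]) := condExp_nonneg hf0
  have hhm0 : Measurable[m0] h := hh.mono hm le_rfl
  -- key equality for truncated weights
  have key : ∀ n : ℕ, ∫⁻ ω, min (h ω) n * ENNReal.ofReal (f ω) ∂μ
      = ∫⁻ ω, min (h ω) n * ENNReal.ofReal ((μ[f|m]) ω) ∂μ := by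
    intro n
    set H : Ω → ℝ := fun ω => (min (h ω) n).toReal with hH
    have hHm : StronglyMeasurable[m] H :=
      ((hh.min measurable_const).ennreal_toReal).stronglyMeasurable
    have hHbd : ∀ ω, ‖H ω‖ ≤ n := by
      intro ω
      rw [Real.norm_eq_abs, abs_of_nonneg ENNReal.toReal_nonneg]
      calc (min (h ω) n).toReal ≤ ((n : ENNReal)).toReal :=
            ENNReal.toReal_mono (ENNReal.natCast_ne_top n) (min_le_right _ _)
        _ = n := by simp
    have hH0 : ∀ ω, 0 ≤ H ω := fun ω => ENNReal.toReal_nonneg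
    have hofReal : ∀ ω, ENNReal.ofReal (H ω) = min (h ω) n := by
      intro ω
      exact ENNReal.ofReal_toReal (by
        exact ne_top_of_le_ne_top (ENNReal.natCast_ne_top n) (min_le_right _ _))
    have hrw : ∀ (φ : Ω → ℝ), (∀ᵐ ω ∂μ, 0 ≤ φ ω) →
        (∀ᵐ ω ∂μ, min (h ω) n * ENNReal.ofReal (φ ω) = ENNReal.ofReal (H ω * φ ω)) := by
      intro φ hφ0
      filter_upwards [hφ0] with ω hω
      rw [ENNReal.ofReal_mul (hH0 ω), hofReal]
    have hHf_int : Integrable (fun ω => H ω * f ω) μ :=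
      hfint.bdd_mul ((hHm.mono hm).aestronglyMeasurable) (Filter.Eventually.of_forall hHbd)
    have hHc_int : Integrable (fun ω => H ω * (μ[f|m]) ω) μ :=
      hcint.bdd_mul ((hHm.mono hm).aestronglyMeasurable) (Filter.Eventually.of_forall hHbd)
    have hHf0 : 0 ≤ᵐ[μ] fun ω => H ω * f ω := by
      filter_upwards [hf0] with ω hω; exact mul_nonneg (hH0 ω) hω
    have hHc0 : 0 ≤ᵐ[μ] fun ω => H ω * (μ[f|m]) ω := by
      filter_upwards [hc0] with ω hω; exact mul_nonneg (hH0 ω) hω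
    have hInt_eq : ∫ ω, H ω * f ω ∂μ = ∫ ω, H ω * (μ[f|m]) ω ∂μ := by
      have hpull : μ[H * f|m] =ᵐ[μ] H * μ[f|m] :=
        condExp_mul_of_stronglyMeasurable_left hHm hHf_int hfint
      calc ∫ ω, H ω * f ω ∂μ = ∫ ω, (H * f) ω ∂μ := rfl
        _ = ∫ ω, (μ[H * f|m]) ω ∂μ := (integral_condExp hm).symm
        _ = ∫ ω, (H * μ[f|m]) ω ∂μ := integral_congr_ae hpull
        _ = ∫ ω, H ω * (μ[f|m]) ω ∂μ := rfl
    calc ∫⁻ ω, min (h ω) n * ENNReal.ofReal (f ω) ∂μ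
        = ∫⁻ ω, ENNReal.ofReal (H ω * f ω) ∂μ := lintegral_congr_ae (hrw f hf0)
      _ = ENNReal.ofReal (∫ ω, H ω * f ω ∂μ) :=
          (ofReal_integral_eq_lintegral_ofReal hHf_int hHf0).symm
      _ = ENNReal.ofReal (∫ ω, H ω * (μ[f|m]) ω ∂μ) := by rw [hInt_eq]
      _ = ∫⁻ ω, ENNReal.ofReal (H ω * (μ[f|m]) ω) ∂μ :=
          ofReal_integral_eq_lintegral_ofReal hHc_int hHc0
      _ = ∫⁻ ω, min (h ω) n * ENNReal.ofReal ((μ[f|m]) ω) ∂μ :=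
          (lintegral_congr_ae (hrw _ hc0)).symm
  -- pass to the supremum using monotone convergence
  have hsup : ∀ a : ENNReal, (⨆ n : ℕ, min a n) = a := by
    intro a
    apply le_antisymm (iSup_le fun n => min_le_left _ _)
    rcases eq_or_ne a ⊤ with rfl | ha
    · calc (⊤ : ENNReal) = ⨆ n : ℕ, (n : ENNReal) := (ENNReal.iSup_natCast).symm
        _ ≤ ⨆ n : ℕ, min ⊤ (n : ENNReal) := by simp
    · obtain ⟨n, hn⟩ := ENNReal.exists_nat_gt ha
      exact le_trans (le_of_eq (min_eq_left hn.le).symm) (le_iSup (fun n : ℕ => min a (n : ENNReal)) n)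
  have hmono : ∀ (φ : Ω → ℝ), Monotone fun (n : ℕ) (ω : Ω) =>
      min (h ω) n * ENNReal.ofReal (φ ω) := by
    intro φ i j hij ω
    exact mul_le_mul_left (min_le_min le_rfl (by exact_mod_cast Nat.cast_le.mpr hij)) _
  have hlim : ∀ (φ : Ω → ℝ), Measurable φ →
      ∫⁻ ω, h ω * ENNReal.ofReal (φ ω) ∂μ
        = ⨆ n : ℕ, ∫⁻ ω, min (h ω) n * ENNReal.ofReal (φ ω) ∂μ := by
    intro φ hφ
    rw [← lintegral_iSup (f := fun n ω => min (h ω) n * ENNReal.ofReal (φ ω)) (fun n => ((hhm0.min measurable_const).mul hφ.ennreal_ofReal))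
      (hmono φ)]
    apply lintegral_congr
    intro ω
    rw [← ENNReal.iSup_mul, hsup]
  have hcmm : Measurable (μ[f|m]) := (stronglyMeasurable_condExp.mono hm).measurable
  rw [hlim f hfm, hlim _ hcmm]
  exact iSup_congr key

/-- Optimal importance-sampling allocation: among all positive measurable sampling
rules `π` with expected budget `E[π(X̃)] ≤ B`, the rule
`π_opt(X̃) = (B/r) √(E[g(X,X̃) | X̃])` minimizes `E[g(X,X̃)/π(X̃)]`. -/
theorem stmt_7 {Ω : Type*} [MeasurableSpace Ω] (μ : Measure Ω) [IsProbabilityMeasure μ]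
    (p : ℕ) (X Xt : Ω → (Fin p → ℝ)) (hX : Measurable X) (hXt : Measurable Xt)
    (g : (Fin p → ℝ) → (Fin p → ℝ) → ℝ)
    (hg : Measurable (Function.uncurry g)) (hg0 : ∀ x y, 0 ≤ g x y)
    (hgint : Integrable (fun ω => g (X ω) (Xt ω)) μ)
    (ϱ : Ω → ℝ)
    (hϱ : ϱ = μ[(fun ω => g (X ω) (Xt ω)) | MeasurableSpace.comap Xt inferInstance])
    (r : ℝ) (hr : r = ∫ ω, Real.sqrt (ϱ ω) ∂μ) (hrpos : 0 < r)
    (B : ℝ) (hB : 0 < B)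
    (πopt : Ω → ℝ) (hπopt : ∀ ω, πopt ω = (B / r) * Real.sqrt (ϱ ω))
    (hπoptpos : ∀ᵐ ω ∂μ, 0 < πopt ω)
    (π : (Fin p → ℝ) → ℝ) (hπ : Measurable π) (hπpos : ∀ x, 0 < π x)
    (hbudget : ∫⁻ ω, ENNReal.ofReal (π (Xt ω)) ∂μ ≤ ENNReal.ofReal B) :
    ∫⁻ ω, ENNReal.ofReal (g (X ω) (Xt ω) / πopt ω) ∂μ
      ≤ ∫⁻ ω, ENNReal.ofReal (g (X ω) (Xt ω) / π (Xt ω)) ∂μ := by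
  have hm : MeasurableSpace.comap Xt inferInstance ≤ (inferInstance : MeasurableSpace Ω) := hXt.comap_le
  set G : Ω → ℝ := fun ω => g (X ω) (Xt ω) with hGdef
  have hGm : Measurable G := hg.comp (hX.prodMk hXt)
  have hG0 : ∀ ω, 0 ≤ G ω := fun ω => hg0 _ _
  have hϱsm : StronglyMeasurable[MeasurableSpace.comap Xt inferInstance] ϱ := hϱ ▸ stronglyMeasurable_condExp
  have hϱmeas : Measurable ϱ := (hϱsm.mono hm).measurable
  have hϱ0 : 0 ≤ᵐ[μ] ϱ := hϱ ▸ condExp_nonneg (Filter.Eventually.of_forall fun ω => hg0 _ _)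
  have hBr : 0 < B / r := div_pos hB hrpos
  have hϱpos : ∀ᵐ ω ∂μ, 0 < ϱ ω := by
    filter_upwards [hπoptpos] with ω hω
    rw [hπopt ω] at hω
    have hs : 0 < Real.sqrt (ϱ ω) := by
      nlinarith [Real.sqrt_nonneg (ϱ ω)]
    exact Real.sqrt_pos.mp hs
  have hsqint : Integrable (fun ω => Real.sqrt (ϱ ω)) μ := by
    by_contra hcon
    rw [integral_undef hcon] at hr
    exact absurd hr hrpos.ne'
  -- measurable weights
  have hXtm : Measurable[MeasurableSpace.comap Xt inferInstance] Xt := Measurable.of_comap_le le_rfl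
  have hπXtm : Measurable[MeasurableSpace.comap Xt inferInstance] fun ω => π (Xt ω) := hπ.comp hXtm
  have hπoptm : Measurable[MeasurableSpace.comap Xt inferInstance] πopt := by
    have : Measurable[MeasurableSpace.comap Xt inferInstance] fun ω => (B / r) * Real.sqrt (ϱ ω) :=
      measurable_const.mul (Real.continuous_sqrt.measurable.comp hϱsm.measurable)
    exact (funext hπopt ▸ this)
  set h₁ : Ω → ENNReal := fun ω => (ENNReal.ofReal (πopt ω))⁻¹ with hh₁
  set h₂ : Ω → ENNReal := fun ω => (ENNReal.ofReal (π (Xt ω)))⁻¹ with hh₂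
  have hh₁m : Measurable[MeasurableSpace.comap Xt inferInstance] h₁ := hπoptm.ennreal_ofReal.inv
  have hh₂m : Measurable[MeasurableSpace.comap Xt inferInstance] h₂ := hπXtm.ennreal_ofReal.inv
  have hdiv : ∀ (a b : ℝ), 0 < b →
      ENNReal.ofReal (a / b) = (ENNReal.ofReal b)⁻¹ * ENNReal.ofReal a := by
    intro a b hb
    rw [ENNReal.ofReal_div_of_pos hb, div_eq_mul_inv, mul_comm]
  have hcondϱ : μ[G|MeasurableSpace.comap Xt inferInstance] = ϱ := hϱ.symm
  -- rewrite LHS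
  have hLHS : ∫⁻ ω, ENNReal.ofReal (G ω / πopt ω) ∂μ
      = ENNReal.ofReal ((r / B) * r) := by
    calc ∫⁻ ω, ENNReal.ofReal (G ω / πopt ω) ∂μ
        = ∫⁻ ω, h₁ ω * ENNReal.ofReal (G ω) ∂μ := by
          refine lintegral_congr_ae ?_
          filter_upwards [hπoptpos] with ω hω
          exact hdiv _ _ hω
      _ = ∫⁻ ω, h₁ ω * ENNReal.ofReal (ϱ ω) ∂μ := by
          have := lintegral_mul_condexp hm μ hGm hgint
            (Filter.Eventually.of_forall hG0) hh₁m
          rw [this, hcondϱ]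
      _ = ∫⁻ ω, ENNReal.ofReal ((r / B) * Real.sqrt (ϱ ω)) ∂μ := by
          refine lintegral_congr_ae ?_
          filter_upwards [hπoptpos, hϱpos] with ω hω hϱω
          rw [← hdiv _ _ hω]
          congr 1
          rw [hπopt ω]
          have hs : Real.sqrt (ϱ ω) ≠ 0 := (Real.sqrt_pos.mpr hϱω).ne'
          have hϱeq : ϱ ω = Real.sqrt (ϱ ω) * Real.sqrt (ϱ ω) :=
            (Real.mul_self_sqrt hϱω.le).symm
          have hBrs : B / r * Real.sqrt (ϱ ω) ≠ 0 :=
            mul_ne_zero (div_pos hB hrpos).ne' hs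
          rw [div_eq_iff hBrs, hϱeq]
          field_simp
          rw [Real.sq_sqrt (sq_nonneg (Real.sqrt (ϱ ω)))]
      _ = ENNReal.ofReal (∫ ω, (r / B) * Real.sqrt (ϱ ω) ∂μ) := by
          refine (ofReal_integral_eq_lintegral_ofReal (hsqint.const_mul _) ?_).symm
          filter_upwards [hϱ0] with ω hω
          exact mul_nonneg (div_nonneg hrpos.le hB.le) (Real.sqrt_nonneg _)
      _ = ENNReal.ofReal ((r / B) * r) := by
          rw [integral_const_mul, ← hr]
  -- rewrite RHS
  have hRHS : ∫⁻ ω, ENNReal.ofReal (G ω / π (Xt ω)) ∂μ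
      = ∫⁻ ω, ENNReal.ofReal (ϱ ω / π (Xt ω)) ∂μ := by
    calc ∫⁻ ω, ENNReal.ofReal (G ω / π (Xt ω)) ∂μ
        = ∫⁻ ω, h₂ ω * ENNReal.ofReal (G ω) ∂μ :=
          lintegral_congr fun ω => hdiv _ _ (hπpos _)
      _ = ∫⁻ ω, h₂ ω * ENNReal.ofReal (ϱ ω) ∂μ := by
          have := lintegral_mul_condexp hm μ hGm hgint
            (Filter.Eventually.of_forall hG0) hh₂m
          rw [this, hcondϱ]
      _ = ∫⁻ ω, ENNReal.ofReal (ϱ ω / π (Xt ω)) ∂μ :=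
          (lintegral_congr fun ω => (hdiv _ _ (hπpos _))).symm
  rw [hLHS, hRHS]
  -- Cauchy–Schwarz
  set R : ENNReal := ∫⁻ ω, ENNReal.ofReal (ϱ ω / π (Xt ω)) ∂μ with hR
  set F : Ω → ENNReal := fun ω => ENNReal.ofReal (Real.sqrt (ϱ ω / π (Xt ω))) with hF
  set Gg : Ω → ENNReal := fun ω => ENNReal.ofReal (Real.sqrt (π (Xt ω))) with hGg
  have hconj : (2 : ℝ).HolderConjugate 2 := Real.HolderConjugate.two_two
  have hFmeas : AEMeasurable F μ :=
    ((Real.continuous_sqrt.measurable.comp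
      ((hϱmeas.div (hπ.comp hXt)))).ennreal_ofReal).aemeasurable
  have hGgmeas : AEMeasurable Gg μ :=
    ((Real.continuous_sqrt.measurable.comp (hπ.comp hXt)).ennreal_ofReal).aemeasurable
  have hCS := ENNReal.lintegral_mul_le_Lp_mul_Lq μ hconj hFmeas hGgmeas
  have hFG : ∫⁻ ω, (F * Gg) ω ∂μ = ENNReal.ofReal r := by
    have : ∀ᵐ ω ∂μ, (F * Gg) ω = ENNReal.ofReal (Real.sqrt (ϱ ω)) := by
      filter_upwards [hϱ0] with ω hω
      have hπω := hπpos (Xt ω)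
      simp only [Pi.mul_apply, hF, hGg]
      rw [← ENNReal.ofReal_mul (Real.sqrt_nonneg _), ← Real.sqrt_mul (div_nonneg hω (hπpos _).le),
        div_mul_cancel₀ _ hπω.ne']
    rw [lintegral_congr_ae this, ← ofReal_integral_eq_lintegral_ofReal hsqint
      (Filter.Eventually.of_forall fun ω => Real.sqrt_nonneg _), ← hr]
  have hsq : ∀ (x : ℝ), 0 ≤ x →
      (ENNReal.ofReal (Real.sqrt x)) ^ (2 : ℝ) = ENNReal.ofReal x := by
    intro x hx
    rw [ENNReal.ofReal_rpow_of_nonneg (Real.sqrt_nonneg _) (by norm_num : (0:ℝ) ≤ 2)]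
    congr 1
    rw [show ((2:ℝ)) = ((2:ℕ):ℝ) by norm_num, Real.rpow_natCast, Real.sq_sqrt hx]
  have hF2 : ∫⁻ ω, F ω ^ (2 : ℝ) ∂μ = R := by
    refine lintegral_congr_ae ?_
    filter_upwards [hϱ0] with ω hω
    exact hsq _ (div_nonneg hω (hπpos _).le)
  have hG2 : ∫⁻ ω, Gg ω ^ (2 : ℝ) ∂μ ≤ ENNReal.ofReal B := by
    refine le_trans (le_of_eq (lintegral_congr fun ω => hsq _ (hπpos _).le)) hbudget
  rw [hFG, hF2] at hCS
  have hCS2 : ENNReal.ofReal r ≤ R ^ (1/2 : ℝ) * (ENNReal.ofReal B) ^ (1/2 : ℝ) := by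
    refine hCS.trans ?_
    exact mul_le_mul_right (ENNReal.rpow_le_rpow hG2 (by norm_num)) _
  have hsquared : (ENNReal.ofReal r) ^ (2 : ℝ) ≤ R * ENNReal.ofReal B := by
    calc (ENNReal.ofReal r) ^ (2 : ℝ)
        ≤ (R ^ (1/2 : ℝ) * (ENNReal.ofReal B) ^ (1/2 : ℝ)) ^ (2 : ℝ) :=
          ENNReal.rpow_le_rpow hCS2 (by norm_num)
      _ = R * ENNReal.ofReal B := by
          rw [ENNReal.mul_rpow_of_nonneg _ _ (by norm_num : (0:ℝ) ≤ 2),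
            ← ENNReal.rpow_mul, ← ENNReal.rpow_mul]
          norm_num
  have hBne : ENNReal.ofReal B ≠ 0 := by
    simp [ENNReal.ofReal_eq_zero, not_le, hB]
  have hBnetop : ENNReal.ofReal B ≠ ⊤ := ENNReal.ofReal_ne_top
  have hfinal : ENNReal.ofReal r ^ (2 : ℝ) / ENNReal.ofReal B ≤ R :=
    ENNReal.div_le_of_le_mul hsquared
  refine le_trans (le_of_eq ?_) hfinal
  rw [show (r / B) * r = (r * r) / B by ring, ENNReal.ofReal_div_of_pos hB,
    ENNReal.ofReal_mul hrpos.le]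
  congr 1
  rw [show ((2:ℝ)) = ((2:ℕ):ℝ) by norm_num, ENNReal.rpow_natCast, sq]
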